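/- Let n ≥ 1 and let d = (d_0, d_1, …, d_n) be a vector of positive integers. Then there exists a vector r of positive integers with gcd of entries equal to 1 such that (d, r) is an arithmetical structure on the star graph S_n if and only if 1/d_1 + 1/d_2 + ⋯ + 1/d_n = d_0 (as rational numbers). In particular, if the equation holds, one may take r_0 = lcm(d_1, …, d_n) and r_i = r_0/d_i for 1 ≤ i ≤ n. -/

import Mathlib

/-- Adjacency matrix of the star graph `S_n` on vertices `{0, 1, …, n}` with
center `0`. -/
def starAdj (n : ℕ) : Matrix (Fin (n+1)) (Fin (n+1)) ℤ :=
  Matrix.of fun i j =>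
    if (i.val = 0 ∧ j.val ≠ 0) ∨ (j.val = 0 ∧ i.val ≠ 0) then 1 else 0

/-- An arithmetical structure on a graph with adjacency matrix `A`. -/
def IsArithStructure {N : ℕ} (A : Matrix (Fin N) (Fin N) ℤ) (d r : Fin N → ℤ) : Prop :=
  (∀ i, 0 < d i) ∧ (∀ i, 0 < r i) ∧ Finset.univ.gcd r = 1 ∧
    (Matrix.diagonal d - A).mulVec r = 0

lemma star_mulVec (n : ℕ) (d r : Fin (n+1) → ℤ) (i : Fin (n+1)) :
    (Matrix.diagonal d - starAdj n).mulVec r i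
      = d i * r i - (if i = 0 then
          ∑ j ∈ Finset.univ.filter (fun j : Fin (n+1) => j ≠ 0), r j else r 0) := by
  simp only [Matrix.mulVec, Matrix.sub_apply, Matrix.diagonal_apply, starAdj, Matrix.of_apply,
    dotProduct, sub_mul, Finset.sum_sub_distrib]
  congr 1
  · rw [Finset.sum_eq_single i]
    · simp
    · intro j _ hj; simp [Ne.symm hj]
    · simp
  · by_cases hi : i = 0
    · subst hi
      simp only [if_pos rfl]
      rw [Finset.sum_filter]
      apply Finset.sum_congr rfl
      intro j _
      by_cases hj : j = 0
      · subst hj; simp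
      · have : j.val ≠ 0 := fun h => hj (Fin.ext h)
        simp [this, hj]
    · have hiv : i.val ≠ 0 := fun h => hi (Fin.ext h)
      rw [if_neg hi, Finset.sum_eq_single 0]
      · simp [hiv]
      · intro j _ hj
        have : j.val ≠ 0 := fun h => hj (Fin.ext h)
        simp [this, hiv]
      · simp

/-- A positive vector `d` is the d-vector of an arithmetical structure on
`S_n` iff `∑_{i=1}^n 1/d_i = d_0`; in that case, one may take
`r_0 = lcm(d_1, …, d_n)` and `r_i = r_0 / d_i`. -/
theorem stmt_12 (n : ℕ) (hn : 1 ≤ n) (d : Fin (n+1) → ℤ) (hd : ∀ i, 0 < d i) :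
    ((∃ r : Fin (n+1) → ℤ, IsArithStructure (starAdj n) d r) ↔
      (∑ i ∈ Finset.univ.filter (fun i : Fin (n+1) => i ≠ 0),
        (1 : ℚ) / (d i : ℚ)) = (d 0 : ℚ)) ∧
    ((∑ i ∈ Finset.univ.filter (fun i : Fin (n+1) => i ≠ 0),
        (1 : ℚ) / (d i : ℚ)) = (d 0 : ℚ) →
      IsArithStructure (starAdj n) d
        (fun i => if i = 0 then
            (Finset.univ.filter (fun i : Fin (n+1) => i ≠ 0)).lcm d
          else (Finset.univ.filter (fun i : Fin (n+1) => i ≠ 0)).lcm d / d i)) := by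
  set s : Finset (Fin (n+1)) := Finset.univ.filter (fun i : Fin (n+1) => i ≠ 0) with hs
  set L : ℤ := s.lcm d with hLdef
  have hsne : s.Nonempty := ⟨⟨1, by omega⟩, by
    rw [hs, Finset.mem_filter]
    refine ⟨Finset.mem_univ _, fun h => ?_⟩
    have h1 : (1:ℕ) = (0 : Fin (n+1)).val := congrArg Fin.val h
    rw [Fin.val_zero] at h1
    omega⟩
  have hdvd : ∀ i ∈ s, d i ∣ L := fun i hi => Finset.dvd_lcm hi
  have hdne : ∀ i, d i ≠ 0 := fun i => (hd i).ne'
  have hLne : L ≠ 0 := by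
    rw [hLdef, Ne, Finset.lcm_eq_zero_iff]
    rintro ⟨i, _, h0⟩
    exact hdne i h0
  have hLnn : 0 ≤ L := by
    rw [hLdef, ← Finset.normalize_lcm, ← Int.abs_eq_normalize]
    exact abs_nonneg _
  have hL0 : 0 < L := lt_of_le_of_ne hLnn (Ne.symm hLne)
  have hLQ : (L : ℚ) ≠ 0 := Int.cast_ne_zero.mpr hLne
  have hrpos : ∀ i ∈ s, 0 < L / d i := by
    intro i hi
    have hmul : L / d i * d i = L := Int.ediv_mul_cancel (hdvd i hi)
    nlinarith [hd i, hL0]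
  -- bridge between the rational equation and an integer equation
  have key : (∑ i ∈ s, ((L / d i : ℤ) : ℚ)) = (∑ i ∈ s, (1 : ℚ) / (d i : ℚ)) * L := by
    rw [Finset.sum_mul]
    refine Finset.sum_congr rfl fun i hi => ?_
    rw [Int.cast_div_charZero (hdvd i hi)]
    ring
  have hbridge : (∑ i ∈ s, (1 : ℚ) / (d i : ℚ)) = (d 0 : ℚ) ↔
      (∑ i ∈ s, L / d i) = d 0 * L := by
    constructor
    · intro h
      have h2 : (∑ i ∈ s, ((L / d i : ℤ) : ℚ)) = ((d 0 : ℤ) : ℚ) * ((L : ℤ) : ℚ) := by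
        rw [key, h]
      exact_mod_cast h2
    · intro h
      have h2 : (∑ i ∈ s, (1 : ℚ) / (d i : ℚ)) * L = (d 0 : ℚ) * L := by
        rw [← key]
        have : ((∑ i ∈ s, L / d i : ℤ) : ℚ) = ((d 0 * L : ℤ) : ℚ) := by exact_mod_cast h
        push_cast at this ⊢
        convert this using 2
      exact mul_right_cancel₀ hLQ h2
  -- the explicit r vector
  set r : Fin (n+1) → ℤ := fun i => if i = 0 then L else L / d i with hrdef
  have hr0 : r 0 = L := by simp [hrdef]
  have hri : ∀ i ∈ s, r i = L / d i := by
    intro i hi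
    have : i ≠ 0 := by simpa [hs] using hi
    simp [hrdef, this]
  -- Part 2 : the rational equation implies the explicit arithmetical structure
  have part2 : (∑ i ∈ s, (1 : ℚ) / (d i : ℚ)) = (d 0 : ℚ) → IsArithStructure (starAdj n) d r := by
    intro hQ
    have hZ : (∑ i ∈ s, L / d i) = d 0 * L := hbridge.mp hQ
    refine ⟨hd, ?_, ?_, ?_⟩
    · intro i
      by_cases hi : i = 0
      · subst hi; simpa [hr0] using hL0
      · have his : i ∈ s := by simp [hs, hi]
        rw [hri i his]; exact hrpos i his
    · -- gcd = 1
      have hgs : s.gcd (fun i => L / d i) = 1 := by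
        set g : ℤ := s.gcd (fun i => L / d i) with hgdef
        have hgdvd : ∀ i ∈ s, g ∣ L / d i := fun i hi => Finset.gcd_dvd hi
        obtain ⟨i₀, hi₀⟩ := hsne
        have hgL : g ∣ L := (hgdvd i₀ hi₀).trans ⟨d i₀, (Int.ediv_mul_cancel (hdvd i₀ hi₀)).symm⟩
        have hgne : g ≠ 0 := by
          intro h0
          have := Finset.gcd_eq_zero_iff.mp (hgdef ▸ h0) i₀ hi₀
          exact (hrpos i₀ hi₀).ne' this
        have hgnn : 0 ≤ g := by
          rw [hgdef, ← Finset.normalize_gcd, ← Int.abs_eq_normalize]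
          exact abs_nonneg _
        have hdivg : ∀ i ∈ s, d i ∣ L / g := by
          intro i hi
          obtain ⟨k, hk⟩ := hgdvd i hi
          refine ⟨k, ?_⟩
          have hL' : L = g * (d i * k) := by
            have := Int.mul_ediv_cancel' (hdvd i hi)
            rw [hk] at this
            rw [← this]; ring
          rw [hL', Int.mul_ediv_cancel_left _ hgne]
        have hLdvdLg : L ∣ L / g := Finset.lcm_dvd hdivg
        have hLgdvdL : L / g ∣ L := ⟨g, (Int.ediv_mul_cancel hgL).symm⟩
        have hgp : 0 < g := lt_of_le_of_ne hgnn (Ne.symm hgne)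
        have hLgnn : 0 ≤ L / g := Int.ediv_nonneg hLnn hgnn
        have heq : L / g = L := Int.dvd_antisymm hLgnn hLnn hLgdvdL hLdvdLg
        have hmul : L / g * g = L := Int.ediv_mul_cancel hgL
        rw [heq] at hmul
        have : L * g = L * 1 := by rw [mul_one]; exact hmul
        exact mul_left_cancel₀ hLne this
      have hdvd1 : Finset.univ.gcd r ∣ 1 := by
        rw [← hgs]
        refine Finset.dvd_gcd fun i hi => ?_
        rw [← hri i hi]
        exact Finset.gcd_dvd (Finset.mem_univ i)
      have hnn : 0 ≤ Finset.univ.gcd r := by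
        rw [← Finset.normalize_gcd, ← Int.abs_eq_normalize]
        exact abs_nonneg _
      rcases Int.isUnit_iff.mp (isUnit_of_dvd_one hdvd1) with h | h
      · exact h
      · omega
    · -- the matrix equation
      funext i
      rw [star_mulVec n d r i]
      by_cases hi : i = 0
      · subst hi
        rw [if_pos rfl, hr0]
        have : ∑ j ∈ s, r j = ∑ j ∈ s, L / d j := Finset.sum_congr rfl hri
        rw [← hs, this, hZ]
        simp
      · have his : i ∈ s := by simp [hs, hi]
        rw [if_neg hi, hri i his, hr0, Int.mul_ediv_cancel' (hdvd i his)]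
        simp
  constructor
  · constructor
    · -- forward: existence implies the rational equation
      rintro ⟨r', hd', hr'pos, _, hmv⟩
      have hcomp : ∀ i, d i * r' i - (if i = 0 then ∑ j ∈ s, r' j else r' 0) = 0 := by
        intro i
        have := congrFun hmv i
        rw [star_mulVec n d r' i] at this
        simpa [hs] using this
      have h0 : d 0 * r' 0 = ∑ j ∈ s, r' j := by
        have := hcomp 0
        simp only [if_true, eq_self_iff_true] at this
        linarith
      have hieq : ∀ i ∈ s, d i * r' i = r' 0 := by
        intro i hi
        have hine : i ≠ 0 := by simpa [hs] using hi
        have := hcomp i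
        rw [if_neg hine] at this
        linarith
      have hr'0Q : (r' 0 : ℚ) ≠ 0 := Int.cast_ne_zero.mpr (hr'pos 0).ne'
      have : ∀ i ∈ s, (1 : ℚ) / (d i : ℚ) = (r' i : ℚ) / (r' 0 : ℚ) := by
        intro i hi
        have hq : ((d i * r' i : ℤ) : ℚ) = ((r' 0 : ℤ) : ℚ) := by exact_mod_cast hieq i hi
        push_cast at hq
        have hdQ : (d i : ℚ) ≠ 0 := Int.cast_ne_zero.mpr (hdne i)
        field_simp
        linarith
      rw [Finset.sum_congr rfl this, ← Finset.sum_div]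
      have hsum : (∑ i ∈ s, (r' i : ℚ)) = ((d 0 : ℤ) : ℚ) * (r' 0 : ℚ) := by
        have : ((∑ j ∈ s, r' j : ℤ) : ℚ) = ((d 0 * r' 0 : ℤ) : ℚ) := by exact_mod_cast h0.symm
        push_cast at this
        rw [this]
      rw [hsum]
      field_simp
    · -- backward: rational equation gives existence via the explicit r
      intro hQ
      exact ⟨r, part2 hQ⟩
  · -- part 2 with the stated lambda
    intro hQ
    exact part2 hQ
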